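/- arXiv:1806.05282 — 2 statements merged into one kernel-verified Lean document; each statement's English description precedes it below -/
import Mathlib

section
/- For a standard normal random variable z and real constants a, b, the expectation E[z · min(1, e^{az+b})] equals a · e^{a²/2 + b} · Φ(−b/|a| − |a|), where Φ is the standard normal CDF (assume a ≠ 0). -/
/-! For `a > 0` the factor `min 1 (exp (a z + b))` is `exp (a z + b)` exactly on
`z ≤ c := -b / a`. Completing the square, `exp (a z + b) φ z = exp (a²/2 + b) φ (z - a)`, and the
first moment of this shifted Gaussian over `(-∞, c]` is `a Φ(c - a) - φ(c - a)`, while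
`∫_{z > c} z φ z = φ c`. Since `exp (a c + b) = 1`, the two `φ` terms cancel.
The case `a < 0` follows from `z ↦ -z`. -/

open MeasureTheory Real

/-- Density of the standard normal distribution. -/
noncomputable def stdGaussianPdf (x : ℝ) : ℝ :=
  (Real.sqrt (2 * π))⁻¹ * Real.exp (-x ^ 2 / 2)

/-- Standard normal cumulative distribution function Φ. -/
noncomputable def stdNormalCDF (x : ℝ) : ℝ :=
  ∫ t in Set.Iic x, stdGaussianPdf t

open Filter Set Topology

lemma stdGaussianPdf_eq_mul_exp (x : ℝ) :
    stdGaussianPdf x = (√(2 * π))⁻¹ * rexp (-(1 / 2) * x ^ 2) := by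
  rw [stdGaussianPdf]; ring_nf

lemma stdGaussianPdf_neg (x : ℝ) : stdGaussianPdf (-x) = stdGaussianPdf x := by
  rw [stdGaussianPdf, stdGaussianPdf, neg_sq]

lemma integrable_stdGaussianPdf : Integrable stdGaussianPdf := by
  simp_rw [funext stdGaussianPdf_eq_mul_exp]
  exact (integrable_exp_neg_mul_sq one_half_pos).const_mul _

lemma integrable_mul_stdGaussianPdf : Integrable fun x ↦ x * stdGaussianPdf x := by
  simp_rw [stdGaussianPdf_eq_mul_exp, mul_left_comm _ (√(2 * π))⁻¹]
  exact (integrable_mul_exp_neg_mul_sq one_half_pos).const_mul _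

lemma hasDerivAt_stdGaussianPdf (x : ℝ) :
    HasDerivAt stdGaussianPdf (-x * stdGaussianPdf x) x := by
  have h : HasDerivAt (fun x : ℝ ↦ -x ^ 2 / 2) (-x) x :=
    ((hasDerivAt_pow 2 x).neg.div_const 2).congr_deriv (by ring)
  exact (h.exp.const_mul (√(2 * π))⁻¹).congr_deriv (by rw [stdGaussianPdf]; ring)

lemma tendsto_stdGaussianPdf_cocompact : Tendsto stdGaussianPdf (cocompact ℝ) (𝓝 0) := by
  have := (tendsto_rpow_abs_mul_exp_neg_mul_sq_cocompact one_half_pos 0).const_mul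
    (√(2 * π))⁻¹
  simpa only [rpow_zero, one_mul, mul_zero, ← stdGaussianPdf_eq_mul_exp] using this

lemma integral_Iic_mul_stdGaussianPdf (c : ℝ) :
    ∫ z in Iic c, z * stdGaussianPdf z = -stdGaussianPdf c := by
  have hderiv (x : ℝ) : HasDerivAt (fun x ↦ -stdGaussianPdf x) (x * stdGaussianPdf x) x :=
    (hasDerivAt_stdGaussianPdf x).neg.congr_deriv (by ring)
  have hlim := (tendsto_stdGaussianPdf_cocompact.mono_left atBot_le_cocompact).neg
  rw [neg_zero] at hlim
  simpa using integral_Iic_of_hasDerivAt_of_tendsto' (fun x _ ↦ hderiv x)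
    integrable_mul_stdGaussianPdf.integrableOn hlim

lemma integral_Ioi_mul_stdGaussianPdf (c : ℝ) :
    ∫ z in Ioi c, z * stdGaussianPdf z = stdGaussianPdf c := by
  have hderiv (x : ℝ) : HasDerivAt (fun x ↦ -stdGaussianPdf x) (x * stdGaussianPdf x) x :=
    (hasDerivAt_stdGaussianPdf x).neg.congr_deriv (by ring)
  have hlim := (tendsto_stdGaussianPdf_cocompact.mono_left atTop_le_cocompact).neg
  rw [neg_zero] at hlim
  simpa using integral_Ioi_of_hasDerivAt_of_tendsto' (fun x _ ↦ hderiv x)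
    integrable_mul_stdGaussianPdf.integrableOn hlim

lemma setIntegral_Iic_comp_sub_right {E : Type*} [NormedAddCommGroup E] [NormedSpace ℝ E]
    (f : ℝ → E) (a c : ℝ) : ∫ z in Iic c, f (z - a) = ∫ u in Iic (c - a), f u := by
  have := (measurePreserving_sub_right volume a).setIntegral_preimage_emb
    (measurableEmbedding_subRight a) f (Iic (c - a))
  rwa [preimage_sub_const_Iic, sub_add_cancel] at this

lemma integral_Iic_mul_stdGaussianPdf_sub (a c : ℝ) :
    ∫ z in Iic c, z * stdGaussianPdf (z - a)
      = a * stdNormalCDF (c - a) - stdGaussianPdf (c - a) := by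
  have h (z : ℝ) : z * stdGaussianPdf (z - a)
      = (z - a) * stdGaussianPdf (z - a) + a * stdGaussianPdf (z - a) := by ring
  simp_rw [h]
  rw [setIntegral_Iic_comp_sub_right (fun u ↦ u * stdGaussianPdf u + a * stdGaussianPdf u),
    integral_add integrable_mul_stdGaussianPdf.integrableOn
      (integrable_stdGaussianPdf.const_mul a).integrableOn,
    integral_const_mul, integral_Iic_mul_stdGaussianPdf, stdNormalCDF]
  ring

lemma exp_mul_stdGaussianPdf (a b z : ℝ) :
    rexp (a * z + b) * stdGaussianPdf z = rexp (a ^ 2 / 2 + b) * stdGaussianPdf (z - a) := by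
  simp only [stdGaussianPdf, mul_left_comm (rexp _), ← exp_add]
  ring_nf

lemma integrable_mul_min_one_exp_mul_stdGaussianPdf (a b : ℝ) :
    Integrable fun z ↦ z * min 1 (rexp (a * z + b)) * stdGaussianPdf z := by
  have hbdd : ∀ z, ‖min 1 (rexp (a * z + b))‖ ≤ 1 := fun z ↦ by
    rw [norm_of_nonneg (le_min zero_le_one (exp_pos _).le)]
    exact min_le_left _ _
  simpa only [mul_left_comm, mul_assoc] using
    integrable_mul_stdGaussianPdf.bdd_mul (by fun_prop) (Eventually.of_forall hbdd)

lemma integral_mul_min_one_exp_mul_stdGaussianPdf_of_pos (a b : ℝ) (ha : 0 < a) :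
    ∫ z, z * min 1 (rexp (a * z + b)) * stdGaussianPdf z
      = a * rexp (a ^ 2 / 2 + b) * stdNormalCDF (-b / a - a) := by
  set c := -b / a
  have hint := integrable_mul_min_one_exp_mul_stdGaussianPdf a b
  have hIic : ∫ z in Iic c, z * min 1 (rexp (a * z + b)) * stdGaussianPdf z
      = rexp (a ^ 2 / 2 + b) * ∫ z in Iic c, z * stdGaussianPdf (z - a) := by
    rw [← integral_const_mul]
    refine setIntegral_congr_fun measurableSet_Iic fun z hz ↦ ?_
    have hneg : a * z + b ≤ 0 := by linarith [(le_div_iff₀ ha).1 hz]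
    rw [min_eq_right (exp_le_one_iff.2 hneg), mul_assoc, exp_mul_stdGaussianPdf]
    ring
  have hIoi : ∫ z in Ioi c, z * min 1 (rexp (a * z + b)) * stdGaussianPdf z
      = ∫ z in Ioi c, z * stdGaussianPdf z := by
    refine setIntegral_congr_fun measurableSet_Ioi fun z hz ↦ ?_
    have hnonneg : 0 ≤ a * z + b := by linarith [(div_lt_iff₀ ha).1 hz]
    rw [min_eq_left (one_le_exp_iff.2 hnonneg), mul_one]
  have hc : rexp (a ^ 2 / 2 + b) * stdGaussianPdf (c - a) = stdGaussianPdf c := by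
    have hroot : a * c + b = 0 := by simp only [c]; field_simp; ring
    rw [← exp_mul_stdGaussianPdf, hroot, exp_zero, one_mul]
  rw [← intervalIntegral.integral_Iic_add_Ioi hint.integrableOn hint.integrableOn, hIic, hIoi,
    integral_Iic_mul_stdGaussianPdf_sub, integral_Ioi_mul_stdGaussianPdf, ← hc]
  ring

/-- For z ~ N(0,1) and real a ≠ 0, b:
`E[z · min(1, e^{az+b})] = a e^{a²/2 + b} Φ(−b/|a| − |a|)`. -/
theorem stmt0 (a b : ℝ) (ha : a ≠ 0) :
    ∫ z : ℝ, z * min 1 (Real.exp (a * z + b)) * stdGaussianPdf z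
      = a * Real.exp (a ^ 2 / 2 + b) * stdNormalCDF (-b / |a| - |a|) := by
  rcases ha.lt_or_gt with ha | ha
  · have h := integral_mul_min_one_exp_mul_stdGaussianPdf_of_pos (-a) b (neg_pos.2 ha)
    rw [abs_of_neg ha, ← integral_neg_eq_self]
    simp only [stdGaussianPdf_neg, neg_mul, integral_neg, mul_neg, neg_sq] at h ⊢
    rw [h]; ring
  · rw [abs_of_pos ha]
    exact integral_mul_min_one_exp_mul_stdGaussianPdf_of_pos a b ha
end

section
/- For all real x, |min(1, eˣ) − min(1, 1+x)| ≤ x². -/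
open Real

theorem Real.abs_exp_sub_one_sub_id_le_sq_of_nonpos {x : ℝ} (hx : x ≤ 0) :
    |exp x - 1 - x| ≤ x ^ 2 := by
  rcases le_or_gt (-1) x with hx₁ | hx₁
  · exact abs_exp_sub_one_sub_id_le (abs_le.2 ⟨hx₁, by linarith⟩)
  · rw [abs_of_nonneg (by linarith [add_one_le_exp x])]
    nlinarith [exp_le_one_iff.2 hx]

/-- For all real x, `|min(1, eˣ) − min(1, 1+x)| ≤ x²`. -/
theorem stmt7 (x : ℝ) :
    |min 1 (Real.exp x) - min 1 (1 + x)| ≤ x ^ 2 := by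
  rcases le_total 0 x with hx | hx
  · rw [min_eq_left (one_le_exp hx), min_eq_left (by linarith), sub_self, abs_zero]
    positivity
  · rw [min_eq_right (exp_le_one_iff.2 hx), min_eq_right (by linarith), ← sub_sub]
    exact abs_exp_sub_one_sub_id_le_sq_of_nonpos hx
end
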